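/- arXiv:0911.2923 — 2 statements merged into one kernel-verified Lean document; each statement's English description precedes it below -/
import Mathlib

section
/- Let V_• be a graded K-algebra generated in degrees ≤ p (finitely generated) and F a multiplicative filtration on V_• which is pointwise left-bounded. Then F is linearly left-bounded: there exists C > 0 such that F_{-Ck} V_k = V_k for all k ≥ 1. -/
/-- On a graded `K`-algebra generated in degrees `≤ p`, any multiplicative
pointwise left-bounded filtration is linearly left-bounded: there is `C > 0` with
`F_{-Ck} V_k = V_k` for all `k ≥ 1`. -/
theorem finitely_generated_linearly_left_bounded
    {K A : Type*} [Field K] [CommRing A] [Algebra K A]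
    (V : ℕ → Submodule K A) (p : ℕ) (hp : 1 ≤ p)
    (hgr : ∀ k m : ℕ, V k * V m ≤ V (k + m))
    (hgen : ∀ k : ℕ, p < k → V k ≤ ⨆ j ∈ Finset.Icc 1 p, V j * V (k - j))
    (F : ℕ → ℝ → Submodule K A)
    (hFV : ∀ (k : ℕ) (t : ℝ), F k t ≤ V k)
    (hFanti : ∀ k : ℕ, Antitone (F k))
    (hmul : ∀ (k m : ℕ) (s t : ℝ), F k s * F m t ≤ F (k + m) (s + t))
    (hplb : ∀ k : ℕ, ∃ t : ℝ, V k ≤ F k t) :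
    ∃ C : ℝ, 0 < C ∧ ∀ k : ℕ, 1 ≤ k → V k ≤ F k (-(C * k)) := by
  choose t ht using hplb
  set C : ℝ := 1 + ∑ j ∈ Finset.Icc 1 p, |t j| with hC
  have hsum : (0:ℝ) ≤ ∑ j ∈ Finset.Icc 1 p, |t j| :=
    Finset.sum_nonneg fun j _ => abs_nonneg _
  have hCpos : 0 < C := by positivity
  refine ⟨C, hCpos, ?_⟩
  have hbase : ∀ j ∈ Finset.Icc 1 p, V j ≤ F j (-(C * j)) := by
    intro j hj
    refine (ht j).trans (hFanti j ?_)
    have hj1 : 1 ≤ j := (Finset.mem_Icc.mp hj).1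
    have h1 : C ≤ C * j := by
      nlinarith [(Nat.one_le_cast (α := ℝ)).mpr hj1, hCpos.le]
    have h2 : |t j| ≤ ∑ i ∈ Finset.Icc 1 p, |t i| :=
      Finset.single_le_sum (fun i _ => abs_nonneg (t i)) hj
    have := neg_abs_le (t j)
    linarith
  intro k hk
  induction k using Nat.strong_induction_on with
  | _ k ih =>
    by_cases hkp : k ≤ p
    · exact hbase k (Finset.mem_Icc.mpr ⟨hk, hkp⟩)
    · push_neg at hkp
      refine (hgen k hkp).trans (iSup₂_le fun j hj => ?_)
      have hj1 : 1 ≤ j := (Finset.mem_Icc.mp hj).1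
      have hjp : j ≤ p := (Finset.mem_Icc.mp hj).2
      have hjk : j < k := lt_of_le_of_lt hjp hkp
      have hkj1 : 1 ≤ k - j := Nat.le_sub_of_add_le (by omega)
      have hcast : ((k - j : ℕ) : ℝ) = (k : ℝ) - (j : ℝ) := Nat.cast_sub hjk.le
      have h1 : V j ≤ F j (-(C * j)) := hbase j hj
      have h2 : V (k - j) ≤ F (k - j) (-(C * (k - j))) := by
        have := ih (k - j) (by omega) hkj1
        rwa [hcast] at this
      refine le_trans (mul_le_mul' h1 h2) ?_
      refine le_trans (hmul j (k - j) _ _) (le_of_eq ?_)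
      have hjk' : j + (k - j) = k := by omega
      rw [hjk']
      congr 1
      ring
end

section
/- Let K be a number field, Ē an adelically normed K-vector space of dimension N such that Ê is finite, with filtration by height F̃_t E := Span_K{x ∈ E : h_Ē(x) ≤ -t}, where h_Ē(x) = ∑_v ([K_v:Q_v]/[K:Q]) log ‖x‖_v. Then the sum of the jumping values satisfies ∑_{j=1}^N e_j(E, F̃) = - inf over all K-bases (x_1,...,x_N) of E of ∑_{j=1}^N h_Ē(x_j). -/
/-!
The jumping values are read off from a greedy construction. If `t_j < e_j` for all `j`, then
`F̃_{t_j}` has dimension at least `j`, so one can choose linearly independent `x_1, …, x_N` with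
`h(x_j) ≤ -t_j`; they form a basis, whence `inf ∑ h ≤ -∑ t_j`. Conversely, if the vectors of a basis
are ordered by increasing height, the first `j` of them lie in `F̃_t` for `t = -h(x_j)`, so
`-h(x_j) ≤ e_j`. Both estimates hold in `[-∞, +∞]` as long as `h` never takes the value `+∞`,
which is the case for the adelic height since `‖x‖_v ≤ 1` at almost all places.
-/

open NumberField IsDedekindDomain Module

namespace EReal

lemma sum_ne_top {ι : Type*} {s : Finset ι} {f : ι → EReal} (hf : ∀ i ∈ s, f i ≠ ⊤) :
    ∑ i ∈ s, f i ≠ ⊤ := by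
  induction s using Finset.cons_induction with
  | empty => simp
  | cons a s _ ih =>
    rw [Finset.sum_cons]
    exact add_ne_top (hf a (s.mem_cons_self a)) (ih fun i hi => hf i (Finset.mem_cons_of_mem hi))

lemma neg_sum {ι : Type*} {s : Finset ι} {f : ι → EReal} (hf : ∀ i ∈ s, f i ≠ ⊤) :
    -∑ i ∈ s, f i = ∑ i ∈ s, -f i := by
  induction s using Finset.cons_induction with
  | empty => simp
  | cons a s _ ih =>
    have hs : ∀ i ∈ s, f i ≠ ⊤ := fun i hi => hf i (Finset.mem_cons_of_mem hi)
    rw [Finset.sum_cons, Finset.sum_cons, neg_add (.inr (sum_ne_top hs))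
      (.inl (hf a (s.mem_cons_self a))), sub_eq_add_neg, ih hs]

lemma exists_coe_lt_left_of_lt_add {a b d : EReal} (hd : d < a + b) :
    ∃ x : ℝ, (x : EReal) < a ∧ d < x + b := by
  have hb : b ≠ ⊥ := by
    rintro rfl
    simp at hd
  obtain ⟨x, hdx, hxa⟩ := exists_between_coe_real (sub_lt_of_lt_add hd)
  exact ⟨x, hxa, (sub_lt_iff (.inl hb) (.inr hd.ne_top)).1 hdx⟩

lemma exists_coe_lt_of_lt_sum {ι : Type*} {s : Finset ι} {a : ι → EReal} {d : EReal}
    (hd : d < ∑ i ∈ s, a i) :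
    ∃ t : ι → ℝ, (∀ i ∈ s, (t i : EReal) < a i) ∧ d < ∑ i ∈ s, (t i : EReal) := by
  classical
  induction s using Finset.cons_induction generalizing d with
  | empty => exact ⟨0, by simp, by simpa using hd⟩
  | cons i s hi ih =>
    rw [Finset.sum_cons] at hd
    obtain ⟨x, hxa, hdx⟩ := exists_coe_lt_left_of_lt_add hd
    obtain ⟨t, hta, hdt⟩ := ih (sub_lt_of_lt_add' hdx)
    have hupdate : ∀ j ∈ s, Function.update t i x j = t j := fun j hj =>
      Function.update_of_ne (ne_of_mem_of_not_mem hj hi) _ _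
    refine ⟨Function.update t i x, fun j hj => ?_, ?_⟩
    · rcases Finset.mem_cons.1 hj with rfl | hj
      · simpa using hxa
      · simpa [hupdate j hj] using hta j hj
    · rw [Finset.sum_cons, Function.update_self, Finset.sum_congr rfl fun j hj => by
        rw [hupdate j hj], add_comm]
      exact (sub_lt_iff (.inl (coe_ne_bot x)) (.inl (coe_ne_top x))).1 hdt

lemma sum_le_of_forall_coe_lt {ι : Type*} {s : Finset ι} {a : ι → EReal} {c : EReal}
    (h : ∀ t : ι → ℝ, (∀ i ∈ s, (t i : EReal) < a i) → ∑ i ∈ s, (t i : EReal) ≤ c) :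
    ∑ i ∈ s, a i ≤ c :=
  le_of_forall_lt_imp_le_of_dense fun _ hd =>
    let ⟨t, hta, hdt⟩ := exists_coe_lt_of_lt_sum hd
    (hdt.trans_le (h t hta)).le

end EReal

lemma Finset.sum_Icc_one_eq_sum_fin {M : Type*} [AddCommMonoid M] (f : ℕ → M) (n : ℕ) :
    ∑ j ∈ Finset.Icc 1 n, f j = ∑ i : Fin n, f (i + 1) := by
  rw [Fin.sum_univ_eq_sum_range (fun i => f (i + 1)), Finset.range_eq_Ico, Finset.sum_Ico_add',
    zero_add]
  rfl

lemma ENNReal.tsum_ofReal_ne_top_of_finite {ι : Type*} {f : ι → ℝ} (hf : {i | 0 < f i}.Finite) :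
    ∑' i, ENNReal.ofReal (f i) ≠ ⊤ := by
  rw [tsum_eq_sum (s := hf.toFinset) fun i hi =>
    ENNReal.ofReal_eq_zero.2 (not_lt.1 (by simpa using hi))]
  exact ENNReal.sum_ne_top.2 fun _ _ => ENNReal.ofReal_ne_top

lemma nonneg_of_map_smul_of_le_max {K E : Type*} [Field K] [AddCommGroup E] [Module K E]
    (abv : AbsoluteValue K ℝ) {n : E → ℝ} (hs : ∀ (c : K) x, n (c • x) = abv c * n x)
    (hu : ∀ x y, n (x + y) ≤ max (n x) (n y)) (x : E) : 0 ≤ n x := by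
  have h0 : n 0 = 0 := by simpa using hs 0 x
  have hneg : n (-x) = n x := by simpa using hs (-1) x
  simpa [h0, hneg] using hu x (-x)

theorem exists_linearIndependent_forall_mem {K E : Type*} [Field K] [AddCommGroup E]
    [Module K E] {n : ℕ} (S : Fin n → Set E)
    (hS : ∀ i : Fin n, (i : ℕ) < finrank K (Submodule.span K (S i))) :
    ∃ x : Fin n → E, LinearIndependent K x ∧ ∀ i, x i ∈ S i := by
  induction n with
  | zero => exact ⟨Fin.elim0, linearIndependent_empty_type, fun i => i.elim0⟩
  | succ n ih =>
    obtain ⟨x, hx, hxS⟩ := ih (fun i => S i.castSucc) fun i => hS i.castSucc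
    have hnot : ¬ S (Fin.last n) ⊆ Submodule.span K (Set.range x) := by
      intro hsub
      have := FiniteDimensional.span_of_finite K (Set.finite_range x)
      have hle := Submodule.finrank_mono (Submodule.span_le.2 hsub)
      rw [finrank_span_eq_card hx, Fintype.card_fin] at hle
      exact (hS (Fin.last n)).not_ge hle
    obtain ⟨y, hyS, hyx⟩ := Set.not_subset.1 hnot
    refine ⟨Fin.snoc x y, linearIndependent_finSnoc.2 ⟨hx, hyx⟩, Fin.lastCases ?_ fun i => ?_⟩
    · simpa using hyS
    · simpa using hxS i

section HeightFiltration

variable (K : Type*) {E : Type*} [Field K] [AddCommGroup E] [Module K E] (h : E → EReal)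

def heightFiltration (t : ℝ) : Submodule K E :=
  Submodule.span K {x | h x ≤ ((-t : ℝ) : EReal)}

noncomputable def jumpingValue (j : ℕ) : EReal :=
  sSup {s : EReal | ∃ t : ℝ, s = (t : EReal) ∧ j ≤ finrank K (heightFiltration K h t)}

lemma heightFiltration_antitone : Antitone (heightFiltration K h) := fun _ _ htt' =>
  Submodule.span_mono fun x (hx : h x ≤ _) => show h x ≤ _ from hx.trans (by simpa using htt')

lemma coe_le_jumpingValue {j : ℕ} {t : ℝ} (hj : j ≤ finrank K (heightFiltration K h t)) :
    (t : EReal) ≤ jumpingValue K h j :=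
  le_sSup ⟨t, rfl, hj⟩

variable [FiniteDimensional K E]

lemma le_finrank_heightFiltration_of_coe_lt_jumpingValue {j : ℕ} {t : ℝ}
    (ht : (t : EReal) < jumpingValue K h j) : j ≤ finrank K (heightFiltration K h t) := by
  obtain ⟨_, ⟨t', rfl, hj⟩, htt'⟩ := lt_sSup_iff.1 ht
  exact hj.trans <| Submodule.finrank_mono <|
    heightFiltration_antitone K h (EReal.coe_lt_coe_iff.1 htt').le

lemma neg_le_jumpingValue {m : ℕ} {x : Fin m → E} (hx : LinearIndependent K x) {a : EReal}
    (ha : ∀ i, h (x i) ≤ a) : -a ≤ jumpingValue K h m := by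
  refine EReal.ge_of_forall_gt_iff_ge.1 fun t ht => coe_le_jumpingValue K h ?_
  have hspan : Submodule.span K (Set.range x) ≤ heightFiltration K h t :=
    Submodule.span_mono <| Set.range_subset_iff.2 fun i =>
      (ha i).trans (by simpa using (EReal.lt_neg_comm.1 ht).le)
  simpa [finrank_span_eq_card hx] using Submodule.finrank_mono hspan

lemma neg_sum_le_sum_jumpingValue {n : ℕ} {x : Fin n → E} (hx : LinearIndependent K x)
    (htop : ∀ i, h (x i) ≠ ⊤) :
    -∑ i, h (x i) ≤ ∑ i : Fin n, jumpingValue K h (i + 1) := by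
  let σ := Tuple.sort (h ∘ x)
  have hσ : Monotone (h ∘ x ∘ σ) := Tuple.monotone_sort (h ∘ x)
  have hstep (i : Fin n) : -h (x (σ i)) ≤ jumpingValue K h (i + 1) :=
    neg_le_jumpingValue K h ((hx.comp σ σ.injective).comp _ (Fin.castLE_injective i.2))
      fun k => hσ (Fin.le_def.2 (Nat.lt_succ_iff.1 k.2))
  calc -∑ i, h (x i) = ∑ i, -h (x (σ i)) := by
        rw [EReal.neg_sum fun i _ => htop i, ← Equiv.sum_comp σ]
    _ ≤ ∑ i : Fin n, jumpingValue K h (i + 1) := Finset.sum_le_sum fun i _ => hstep i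

lemma sum_jumpingValue_le_neg_sInf :
    ∑ i : Fin (finrank K E), jumpingValue K h (i + 1)
      ≤ -sInf {s | ∃ b : Basis (Fin (finrank K E)) K E, s = ∑ j, h (b j)} := by
  refine EReal.sum_le_of_forall_coe_lt fun t ht => EReal.le_neg_of_le_neg ?_
  obtain ⟨x, hx, hxt⟩ := exists_linearIndependent_forall_mem
    (fun i => {y | h y ≤ ((-t i : ℝ) : EReal)}) fun i =>
      le_finrank_heightFiltration_of_coe_lt_jumpingValue K h (ht i (Finset.mem_univ i))
  let b := basisOfLinearIndependentOfCardEqFinrank' x hx (Fintype.card_fin _)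
  refine le_trans (sInf_le ⟨b, rfl⟩) ?_
  calc ∑ j, h (b j) ≤ ∑ j, -(t j : EReal) :=
        Finset.sum_le_sum fun j _ => by simpa [b] using hxt j
    _ = -∑ j, (t j : EReal) := (EReal.neg_sum fun j _ => EReal.coe_ne_top _).symm

theorem sum_jumpingValue_eq_neg_sInf (htop : ∀ x, h x ≠ ⊤) :
    ∑ j ∈ Finset.Icc 1 (finrank K E), jumpingValue K h j
      = -sInf {s | ∃ b : Basis (Fin (finrank K E)) K E, s = ∑ j, h (b j)} := by
  rw [Finset.sum_Icc_one_eq_sum_fin]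
  refine le_antisymm (sum_jumpingValue_le_neg_sInf K h) (EReal.neg_le.2 (le_sInf ?_))
  rintro _ ⟨b, rfl⟩
  exact EReal.neg_le.1 (neg_sum_le_sum_jumpingValue K h b.linearIndependent fun _ => htop _)

end HeightFiltration

theorem height_filtration_jumping_values_sum_general
    {K : Type*} [Field K] [NumberField K]
    {E : Type*} [AddCommGroup E] [Module K E] [FiniteDimensional K E]
    (vabs : HeightOneSpectrum (𝓞 K) → AbsoluteValue K ℝ)
    -- the local degrees `d v = [K_v : ℚ_v]` at the finite places
    (d : HeightOneSpectrum (𝓞 K) → ℕ)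
    (nf : HeightOneSpectrum (𝓞 K) → E → ℝ)
    (ni : InfinitePlace K → E → ℝ)
    (hnfs : ∀ v (c : K) (x : E), nf v (c • x) = vabs v c * nf v x)
    (hnfu : ∀ v (x y : E), nf v (x + y) ≤ max (nf v x) (nf v y))
    (hlocfin : ∀ x : E, {v : HeightOneSpectrum (𝓞 K) | 1 < nf v x}.Finite)
    -- the height function, with values in `ℝ ∪ {±∞}`
    (h : E → EReal)
    (hheight : ∀ x : E, h x =
      (((Module.finrank ℚ K : ℝ)⁻¹ : ℝ) : EReal) *
        (((∑' v : HeightOneSpectrum (𝓞 K),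
              ENNReal.ofReal ((d v : ℝ) * Real.log (nf v x)) : ENNReal) : EReal)
          - ((∑' v : HeightOneSpectrum (𝓞 K),
              ENNReal.ofReal (-((d v : ℝ) * Real.log (nf v x))) : ENNReal) : EReal)
          + ((∑ w : InfinitePlace K, (w.mult : ℝ) * Real.log (ni w x) : ℝ) : EReal)))
    -- the filtration by height
    (F : ℝ → Submodule K E)
    (hF : ∀ t : ℝ, F t = Submodule.span K {x : E | h x ≤ ((-t : ℝ) : EReal)})
    -- its jumping values
    (e : ℕ → EReal)
    (he : ∀ j : ℕ,
      e j = sSup {s : EReal | ∃ t : ℝ, s = (t : EReal) ∧ j ≤ Module.finrank K (F t)}) :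
    ∑ j ∈ Finset.Icc 1 (Module.finrank K E), e j
      = - sInf {s : EReal |
          ∃ b : Module.Basis (Fin (Module.finrank K E)) K E, s = ∑ j, h (b j)} := by
  have hnf_nonneg (v) (x : E) : 0 ≤ nf v x :=
    nonneg_of_map_smul_of_le_max (vabs v) (hnfs v) (hnfu v) x
  have htop (x : E) : h x ≠ ⊤ := by
    have hpos : ∑' v, ENNReal.ofReal ((d v : ℝ) * Real.log (nf v x)) ≠ ⊤ :=
      ENNReal.tsum_ofReal_ne_top_of_finite <| (hlocfin x).subset fun v hv => not_le.1 fun hle =>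
        hv.not_ge (mul_nonpos_of_nonneg_of_nonpos (Nat.cast_nonneg _)
          (Real.log_nonpos (hnf_nonneg v x) hle))
    rw [hheight x]
    refine (EReal.mul_ne_top _ _).2 ⟨.inl (EReal.coe_ne_bot _),
      .inl (EReal.coe_nonneg.2 (by positivity)), .inl (EReal.coe_ne_top _), .inr ?_⟩
    exact EReal.add_ne_top (EReal.add_ne_top (by simpa using hpos) (by simp)) (EReal.coe_ne_top _)
  obtain rfl : F = heightFiltration K h := funext hF
  obtain rfl : e = jumpingValue K h := funext he
  exact sum_jumpingValue_eq_neg_sInf K h htop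

/-- Let `K` be a number field and `Ē` an adelically normed `K`-vector space
of dimension `N` with finite set of small elements `Ê`. Define the height
`h(x) = (1/[K:ℚ]) ∑_v d_v log ‖x‖_v` (sum over all places, weighted by the local degrees
`d_v = [K_v : ℚ_v]`, with value in `ℝ ∪ {-∞}` computed from the positive and negative parts
of the series over the finite places) and the filtration by height
`F̃_t = span_K {x : h(x) ≤ -t}` with jumping values `e_j = sup {t : dim F̃_t ≥ j}`. Then
`∑_{j=1}^N e_j = - inf` over all `K`-bases `(x_1, …, x_N)` of `E` of `∑_j h(x_j)`. -/
theorem height_filtration_jumping_values_sum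
    {K : Type*} [Field K] [NumberField K]
    {E : Type*} [AddCommGroup E] [Module K E] [FiniteDimensional K E]
    (vabs : HeightOneSpectrum (𝓞 K) → AbsoluteValue K ℝ)
    (hnonarch : ∀ (v : HeightOneSpectrum (𝓞 K)) (a b : K),
      vabs v (a + b) ≤ max (vabs v a) (vabs v b))
    (hcompat : ∀ (v : HeightOneSpectrum (𝓞 K)) (c : K),
      vabs v c ≤ 1 ↔ v.valuation K c ≤ 1)
    -- the local degrees `d v = [K_v : ℚ_v]` at the finite places
    (d : HeightOneSpectrum (𝓞 K) → ℕ) (hd : ∀ v, 0 < d v)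
    (nf : HeightOneSpectrum (𝓞 K) → E → ℝ)
    (ni : InfinitePlace K → E → ℝ)
    (hnf0 : ∀ v (x : E), nf v x = 0 ↔ x = 0)
    (hnfs : ∀ v (c : K) (x : E), nf v (c • x) = vabs v c * nf v x)
    (hnfu : ∀ v (x y : E), nf v (x + y) ≤ max (nf v x) (nf v y))
    (hni0 : ∀ w (x : E), ni w x = 0 ↔ x = 0)
    (hninn : ∀ w (x : E), 0 ≤ ni w x)
    (hnis : ∀ w (c : K) (x : E), ni w (c • x) = w c * ni w x)
    (hnit : ∀ w (x y : E), ni w (x + y) ≤ ni w x + ni w y)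
    (hlocfin : ∀ x : E, {v : HeightOneSpectrum (𝓞 K) | 1 < nf v x}.Finite)
    -- the set of small elements is finite
    (hEhat : {x : E | (∀ v, nf v x ≤ 1) ∧ ∀ w, ni w x ≤ 1}.Finite)
    -- the height function, with values in `ℝ ∪ {±∞}`
    (h : E → EReal)
    (hheight : ∀ x : E, h x =
      (((Module.finrank ℚ K : ℝ)⁻¹ : ℝ) : EReal) *
        (((∑' v : HeightOneSpectrum (𝓞 K),
              ENNReal.ofReal ((d v : ℝ) * Real.log (nf v x)) : ENNReal) : EReal)
          - ((∑' v : HeightOneSpectrum (𝓞 K),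
              ENNReal.ofReal (-((d v : ℝ) * Real.log (nf v x))) : ENNReal) : EReal)
          + ((∑ w : InfinitePlace K, (w.mult : ℝ) * Real.log (ni w x) : ℝ) : EReal)))
    -- the filtration by height
    (F : ℝ → Submodule K E)
    (hF : ∀ t : ℝ, F t = Submodule.span K {x : E | h x ≤ ((-t : ℝ) : EReal)})
    -- its jumping values
    (e : ℕ → EReal)
    (he : ∀ j : ℕ,
      e j = sSup {s : EReal | ∃ t : ℝ, s = (t : EReal) ∧ j ≤ Module.finrank K (F t)}) :
    ∑ j ∈ Finset.Icc 1 (Module.finrank K E), e j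
      = - sInf {s : EReal |
          ∃ b : Module.Basis (Fin (Module.finrank K E)) K E, s = ∑ j, h (b j)} :=
  height_filtration_jumping_values_sum_general vabs d nf ni hnfs hnfu hlocfin h hheight F hF e he
end
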